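/- Let r ≥ 3 and 1 ≤ a₁ ≤ ⋯ ≤ a_r, and let G be a K_r^(r−1)(a₁,…,a_r)-free (r−1)-uniform hypergraph on n vertices with a_{r−1} ≥ 2. Define 𝓐 to be the family of all sets {T₁,…,T_{a_{r−1}}} of a_{r−1} distinct cliques K_r^(r−1) of G that share a common edge of G. Then |𝓐| ≤ C(n, a_{r−1}) · max over a_{r−1}-sets {v₁,…,v_{a_{r−1}}} of the number of edges of G(v₁) ∩ ⋯ ∩ G(v_{a_{r−1}}), where each such intersection hypergraph is K_{r−1}^(r−1)(a₁,…,a_{r−2},a_r)-free. -/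

import Mathlib

/-
Part one: if `G(v₁) ∩ ⋯ ∩ G(v_a)` contained `K_{r-1}^(r-1)(a₁,…,a_{r-2},a_r)` with parts
`V₁,…,V_{r-1}`, then adding `{v₁,…,v_a}` as a new part gives `K_r^(r-1)(a₁,…,a_r)` in `G`: a
transversal either avoids the new part, and is then an edge `e` of the intersection, which lies
in the clique `e ∪ {v_i}`; or it is contained in `e ∪ {v_i}` for some such `e`.

Part two: a family of `a` cliques sharing an edge `e` is `{e ∪ {v} : v ∈ vs}` for an `a`-set `vs`
with `e ∈ G(vs)`, so the families inject into the pairs `(vs, e)`.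
-/
/-- `G` contains a copy of the complete `ℓ`-partite `t`-uniform hypergraph with
part sizes `c 0, …, c (ℓ-1)`. -/
def ContainsCMP {α : Type*} [DecidableEq α] (G : Finset (Finset α)) (t ℓ : ℕ)
    (c : Fin ℓ → ℕ) : Prop :=
  ∃ V : Fin ℓ → Finset α,
    (∀ i j, i ≠ j → Disjoint (V i) (V j)) ∧ (∀ i, (V i).card = c i) ∧
    ∀ S : Finset (Fin ℓ), S.card = t →
      ∀ g : Fin ℓ → α, (∀ i ∈ S, g i ∈ V i) → S.image g ∈ G

/-- `S` spans a clique `K_r^(r-1)` in the `(r-1)`-uniform hypergraph `G`. -/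
def SpansClique {α : Type*} [DecidableEq α] (G : Finset (Finset α)) (r : ℕ)
    (S : Finset α) : Prop :=
  S.card = r ∧ ∀ f ∈ S.powersetCard (r - 1), f ∈ G

instance {α : Type*} [DecidableEq α] (G : Finset (Finset α)) (r : ℕ) :
    DecidablePred (SpansClique G r) := fun S =>
  decidable_of_iff (S.card = r ∧ ∀ f ∈ S.powersetCard (r - 1), f ∈ G) Iff.rfl

/-- The intersection hypergraph `G(v₁) ∩ ⋯ ∩ G(v_a)` for `vs = {v₁,…,v_a}`. -/
def interGraph {α : Type*} [DecidableEq α] [Fintype α] (G : Finset (Finset α)) (r : ℕ)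
    (vs : Finset α) : Finset (Finset α) :=
  (Finset.univ.powersetCard (r - 1)).filter fun e =>
    Disjoint e vs ∧ ∀ v ∈ vs, SpansClique G r (insert v e)

open Finset

section

variable {α : Type*} {ℓ : ℕ} {W : Fin ℓ → Finset α}

theorem injOn_of_mem_of_pairwise_disjoint (hW : ∀ i j, i ≠ j → Disjoint (W i) (W j))
    {S : Finset (Fin ℓ)} {g : Fin ℓ → α} (hg : ∀ i ∈ S, g i ∈ W i) : Set.InjOn g S := by
  intro i hi j hj hij
  by_contra hne
  exact disjoint_left.1 (hW i j hne) (hg i hi) (hij ▸ hg j hj)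

variable [DecidableEq α]

/-- With all parts nonempty, every partial transversal extends to a full one. -/
theorem containsCMP_of_forall_transversal (G : Finset (Finset α)) (t : ℕ) (c : Fin ℓ → ℕ)
    (hW : ∀ i j, i ≠ j → Disjoint (W i) (W j)) (hcard : ∀ i, (W i).card = c i)
    (hne : ∀ i, (W i).Nonempty)
    (hG : ∀ g : Fin ℓ → α, (∀ i, g i ∈ W i) → ∀ f ⊆ univ.image g, f.card = t → f ∈ G) :
    ContainsCMP G t ℓ c := by
  refine ⟨W, hW, hcard, fun S hS g hg => ?_⟩
  let g' : Fin ℓ → α := fun i => if i ∈ S then g i else (hne i).choose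
  have hg' : ∀ i, g' i ∈ W i := fun i => by
    unfold g'
    split_ifs with hi
    exacts [hg i hi, (hne i).choose_spec]
  have himage : S.image g' = S.image g := image_congr fun i hi => if_pos (mem_coe.1 hi)
  rw [← himage]
  refine hG g' hg' _ (image_subset_image (subset_univ S)) ?_
  rw [card_image_of_injOn (injOn_of_mem_of_pairwise_disjoint hW fun i _ => hg' i), hS]

theorem univ_image_eq_insert_succAbove {n : ℕ} (g : Fin (n + 1) → α) (p : Fin (n + 1)) :
    univ.image g = insert (g p) (univ.image (g ∘ p.succAbove)) := by
  rw [Fin.univ_succAbove n p, cons_eq_insert, image_insert, map_eq_image, image_image]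
  rfl

theorem eq_insert_of_mem_sdiff {S e : Finset α} (he : e ⊆ S) (hcard : S.card = e.card + 1)
    {x : α} (hx : x ∈ S \ e) : S = insert x e :=
  (eq_of_subset_of_card_le (insert_subset (mem_sdiff.1 hx).1 he)
    (by rw [card_insert_of_notMem (mem_sdiff.1 hx).2, hcard])).symm

end

section

variable {α : Type*} [DecidableEq α] [Fintype α] {G : Finset (Finset α)} {r k : ℕ}
  {vs e : Finset α}

theorem mem_interGraph : e ∈ interGraph G r vs ↔
    e.card = r - 1 ∧ Disjoint e vs ∧ ∀ v ∈ vs, SpansClique G r (insert v e) := by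
  simp [interGraph]

theorem mem_of_mem_interGraph_of_subset_insert (he : e ∈ interGraph G r vs) {v : α}
    (hv : v ∈ vs) {f : Finset α} (hf : f ⊆ insert v e) (hfcard : f.card = r - 1) : f ∈ G :=
  ((mem_interGraph.1 he).2.2 v hv).2 f (mem_powersetCard.2 ⟨hf, hfcard⟩)

/-- A transversal `g` of the enlarged family is `insert (g p) e` with `e` an edge of the
intersection hypergraph, so it spans a clique of `G` since `g p ∈ vs`. -/
theorem ContainsCMP.insertNth_of_interGraph {c : Fin k → ℕ} (hc : ∀ i, 0 < c i)
    (hvs : vs.Nonempty) (p : Fin (k + 1)) (h : ContainsCMP (interGraph G (k + 1) vs) k k c) :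
    ContainsCMP G k (k + 1) (p.insertNth vs.card c) := by
  obtain ⟨V, hVdisj, hVcard, hVedge⟩ := h
  have hVne : ∀ i, (V i).Nonempty := fun i => card_pos.1 ((hVcard i).symm ▸ hc i)
  have htransversal :
      ∀ g : Fin k → α, (∀ i, g i ∈ V i) → univ.image g ∈ interGraph G (k + 1) vs :=
    fun g hg => hVedge univ (card_fin k) g fun i _ => hg i
  have hVvs : ∀ i, Disjoint (V i) vs := by
    choose q hq using hVne
    intro i
    refine disjoint_left.2 fun x hx => disjoint_left.1
      (mem_interGraph.1 (htransversal (Function.update q i x) fun j => ?_)).2.1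
      (mem_image.2 ⟨i, mem_univ _, Function.update_self i x q⟩)
    rcases eq_or_ne j i with rfl | hji
    · simpa using hx
    · simpa [hji] using hq j
  refine containsCMP_of_forall_transversal G k _ (W := p.insertNth vs V) ?_ ?_ ?_ ?_
  · intro i j hij
    induction i using p.succAboveCases <;> induction j using p.succAboveCases <;>
      simp only [Fin.insertNth_apply_same, Fin.insertNth_apply_succAbove]
    exacts [absurd rfl hij, (hVvs _).symm, hVvs _, hVdisj _ _ (ne_of_apply_ne _ hij)]
  · simp [Fin.forall_iff_succAbove p, hVcard]
  · simp [Fin.forall_iff_succAbove p, hvs, hVne]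
  · intro g hg f hf hfcard
    rw [univ_image_eq_insert_succAbove g p] at hf
    refine mem_of_mem_interGraph_of_subset_insert (htransversal _ fun i => ?_) ?_ hf hfcard
    · simpa using hg (p.succAbove i)
    · simpa using hg p

/-- A clique `S ⊇ e` is `insert v e` for the single vertex `v` of `S \ e`, so the family `T` is
recovered from `e` and the set of these apexes. -/
theorem exists_eq_image_insert_of_forall_subset {T : Finset (Finset α)}
    (hT : ∀ S ∈ T, SpansClique G (k + 1) S) (hecard : e.card = k) (he : ∀ S ∈ T, e ⊆ S) :
    ∃ vs ∈ univ.powersetCard T.card, e ∈ interGraph G (k + 1) vs ∧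
      T = vs.image (insert · e) := by
  have hinsert : ∀ S ∈ T, ∀ x ∈ S \ e, S = insert x e := fun S hS _ =>
    eq_insert_of_mem_sdiff (he S hS) (by rw [(hT S hS).1, hecard])
  set vs := T.biUnion (· \ e)
  have hvs : ∀ v ∈ vs, ∃ S ∈ T, v ∉ e ∧ insert v e = S := fun v hv => by
    obtain ⟨S, hS, hvS⟩ := mem_biUnion.1 hv
    exact ⟨S, hS, (mem_sdiff.1 hvS).2, (hinsert S hS v hvS).symm⟩
  have hTeq : T = vs.image (insert · e) := by
    ext S
    refine ⟨fun hS => ?_, fun hS => ?_⟩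
    · obtain ⟨x, hx⟩ : (S \ e).Nonempty := by
        rw [← card_pos, card_sdiff_of_subset (he S hS), (hT S hS).1, hecard]
        omega
      exact mem_image.2 ⟨x, mem_biUnion.2 ⟨S, hS, hx⟩, (hinsert S hS x hx).symm⟩
    · obtain ⟨v, hv, rfl⟩ := mem_image.1 hS
      obtain ⟨S, hS, -, rfl⟩ := hvs v hv
      exact hS
  have hdisj : Disjoint e vs := disjoint_right.2 fun v hv => by
    obtain ⟨S, -, hve, -⟩ := hvs v hv
    exact hve
  refine ⟨vs, mem_powersetCard.2 ⟨subset_univ _, ?_⟩, mem_interGraph.2 ⟨?_, hdisj, ?_⟩, hTeq⟩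
  · rw [hTeq, card_image_of_injOn]
    exact fun v hv w _ hvw => (insert_inj (disjoint_right.1 hdisj hv)).1 hvw
  · rw [hecard, Nat.add_sub_cancel]
  · intro v hv
    obtain ⟨S, hS, -, rfl⟩ := hvs v hv
    exact hT _ hS

theorem card_filter_cliques_sharing_edge_le (hG : ∀ e ∈ G, e.card = k) (m : ℕ) :
    (univ.filter fun T : Finset (Finset α) =>
        T.card = m ∧ (∀ S ∈ T, SpansClique G (k + 1) S) ∧ ∃ e ∈ G, ∀ S ∈ T, e ⊆ S).card ≤
      ∑ vs ∈ univ.powersetCard m, (interGraph G (k + 1) vs).card := by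
  rw [← card_sigma]
  refine card_le_card_of_surjOn (fun x => x.1.image (insert · x.2)) fun T hT => ?_
  obtain ⟨rfl, hcl, e, heG, he⟩ := (mem_filter.1 hT).2
  obtain ⟨vs, hvs, hevs, rfl⟩ := exists_eq_image_insert_of_forall_subset hcl (hG e heG) he
  exact ⟨⟨vs, e⟩, mem_sigma.2 ⟨hvs, hevs⟩, rfl⟩

end

theorem insertNth_penultimate_eq_shift (a : ℕ → ℕ) (k : ℕ) :
    (Fin.last k).castSucc.insertNth (a (k + 1))
        (fun i : Fin (k + 1) => if (i : ℕ) = k then a (k + 2) else a (i.val + 1)) =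
      fun i => a (i.val + 1) := by
  funext i
  induction i using (Fin.last k).castSucc.succAboveCases with
  | x => simp
  | p j =>
    rw [Fin.insertNth_apply_succAbove]
    rcases Fin.eq_castSucc_or_eq_last j with ⟨j, rfl⟩ | rfl
    · simp [Fin.succAbove_of_castSucc_lt, j.isLt.ne]
    · simp

theorem stmt12_general {n r : ℕ} (hr : 3 ≤ r)
    (a : ℕ → ℕ) (ha1 : ∀ i, 1 ≤ i → i ≤ r → 1 ≤ a i)
    (G : Finset (Finset (Fin n))) (hG : ∀ e ∈ G, e.card = r - 1)
    (hfree : ¬ ContainsCMP G (r - 1) r (fun i => a (i.val + 1))) :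
    -- each intersection hypergraph is `K_{r-1}^(r-1)(a₁,…,a_{r-2},a_r)`-free
    (∀ vs : Finset (Fin n), vs.card = a (r - 1) →
      ¬ ContainsCMP (interGraph G r vs) (r - 1) (r - 1)
          (fun i => if (i : ℕ) = r - 2 then a r else a (i.val + 1))) ∧
    -- `|𝓐| ≤ C(n, a_{r-1}) · max_{vs} |G(v₁) ∩ ⋯ ∩ G(v_{a_{r-1}})|`
    (Finset.univ.filter fun T : Finset (Finset (Fin n)) =>
        T.card = a (r - 1) ∧ (∀ S ∈ T, SpansClique G r S) ∧
        ∃ e ∈ G, ∀ S ∈ T, e ⊆ S).card ≤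
      n.choose (a (r - 1)) *
        ((Finset.univ.powersetCard (a (r - 1))).sup fun vs => (interGraph G r vs).card) := by
  obtain ⟨k, rfl⟩ : ∃ k, r = k + 2 := ⟨r - 2, by omega⟩
  refine ⟨fun vs hvs hcmp => hfree ?_, ?_⟩
  · have hvs_ne : vs.Nonempty := by
      rw [← card_pos, hvs]
      exact ha1 (k + 1) (by omega) (by omega)
    have hparts : ∀ i : Fin (k + 1), 0 < if (i : ℕ) = k then a (k + 2) else a (i.val + 1) := by
      intro i
      split_ifs
      exacts [ha1 _ (by omega) le_rfl, ha1 _ (by omega) (by omega)]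
    exact insertNth_penultimate_eq_shift a k ▸ hvs ▸
      hcmp.insertNth_of_interGraph hparts hvs_ne (Fin.last k).castSucc
  · calc _ ≤ ∑ vs ∈ univ.powersetCard (a (k + 1)), (interGraph G (k + 2) vs).card :=
          card_filter_cliques_sharing_edge_le hG _
      _ ≤ (univ.powersetCard (a (k + 1))).card *
            (univ.powersetCard (a (k + 1))).sup fun vs => (interGraph G (k + 2) vs).card :=
          sum_le_card_nsmul _ _ _ fun _ hvs =>
            le_sup (f := fun vs => (interGraph G (k + 2) vs).card) hvs
      _ = _ := by rw [card_powersetCard, card_univ, Fintype.card_fin]; rfl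

theorem stmt12 {n r : ℕ} (hr : 3 ≤ r)
    (a : ℕ → ℕ) (ha1 : ∀ i, 1 ≤ i → i ≤ r → 1 ≤ a i)
    (hmono : ∀ i, 1 ≤ i → i < r → a i ≤ a (i + 1)) (ha2 : 2 ≤ a (r - 1))
    (G : Finset (Finset (Fin n))) (hG : ∀ e ∈ G, e.card = r - 1)
    (hfree : ¬ ContainsCMP G (r - 1) r (fun i => a (i.val + 1))) :
    -- each intersection hypergraph is `K_{r-1}^(r-1)(a₁,…,a_{r-2},a_r)`-free
    (∀ vs : Finset (Fin n), vs.card = a (r - 1) →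
      ¬ ContainsCMP (interGraph G r vs) (r - 1) (r - 1)
          (fun i => if (i : ℕ) = r - 2 then a r else a (i.val + 1))) ∧
    -- `|𝓐| ≤ C(n, a_{r-1}) · max_{vs} |G(v₁) ∩ ⋯ ∩ G(v_{a_{r-1}})|`
    (Finset.univ.filter fun T : Finset (Finset (Fin n)) =>
        T.card = a (r - 1) ∧ (∀ S ∈ T, SpansClique G r S) ∧
        ∃ e ∈ G, ∀ S ∈ T, e ⊆ S).card ≤
      n.choose (a (r - 1)) *
        ((Finset.univ.powersetCard (a (r - 1))).sup fun vs => (interGraph G r vs).card) :=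
  stmt12_general hr a ha1 G hG hfree
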